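/- arXiv:1503.00525 — 2 statements merged into one kernel-verified Lean document; each statement's English description precedes it below -/
import Mathlib

section
/- Let k ∈ ℕ. Then there exists a function F : ℂ → ℂ, holomorphic on ℂ ∖ {(1−k)/2}, such that F(s) = Σ_{n=1}^∞ (2/(nλ(1−x)+2))^{2s} · (xₙ − 1)^k for all s ∈ ℂ with Re s > 1/2, and such that s ↦ (s − (1−k)/2)·F(s) extends to an entire function. (The untwisted parabolic part of the fast transfer operator, evaluated on the monomial (z−1)^k at a real point, extends meromorphically to ℂ with at most a simple pole, located at s = (1−k)/2.) -/
/-!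
With `a = 2 / (λ (1 - x))` one has `xₙ - 1 = (x - 1) qₙ` and `qₙ = 2 / (nλ(1 - x) + 2) = a / (n + a)`,
so the `n`-th term of the series is `(x - 1)^k a^w (n + a)^(-w)` with `w = 2s + k`. The series is
therefore `(x - 1)^k a^w` times the Hurwitz zeta function `ζ(w, 1 + a)`, which differs from
Mathlib's `hurwitzZeta` at a parameter in `(0, 1]` by finitely many entire terms and so is
holomorphic except for a simple pole at `w = 1`, i.e. at `s = (1 - k) / 2`.
-/

open Complex HurwitzZeta Finset

def HolomorphicExceptSimplePole (F : ℂ → ℂ) (p : ℂ) : Prop :=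
  (∀ s, s ≠ p → DifferentiableAt ℂ F s) ∧
    ∃ G : ℂ → ℂ, Differentiable ℂ G ∧ ∀ s, s ≠ p → G s = (s - p) * F s

namespace HolomorphicExceptSimplePole

variable {F g : ℂ → ℂ} {p : ℂ}

lemma mul_left (hF : HolomorphicExceptSimplePole F p) (hg : Differentiable ℂ g) :
    HolomorphicExceptSimplePole (fun s => g s * F s) p := by
  obtain ⟨hdiff, G, hG, hGF⟩ := hF
  refine ⟨fun s hs => (hg s).mul (hdiff s hs), fun s => g s * G s, hg.mul hG, fun s hs => ?_⟩
  dsimp only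
  rw [hGF s hs]
  ring

lemma sub (hF : HolomorphicExceptSimplePole F p) (hg : Differentiable ℂ g) :
    HolomorphicExceptSimplePole (fun s => F s - g s) p := by
  obtain ⟨hdiff, G, hG, hGF⟩ := hF
  refine ⟨fun s hs => (hdiff s hs).sub (hg s), fun s => G s - (s - p) * g s,
    hG.sub ((differentiable_id.sub_const p).mul hg), fun s hs => ?_⟩
  dsimp only
  rw [hGF s hs]
  ring

lemma comp_mul_add (hF : HolomorphicExceptSimplePole F p) {a : ℂ} (ha : a ≠ 0) (b : ℂ) :
    HolomorphicExceptSimplePole (fun s => F (a * s + b)) ((p - b) / a) := by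
  obtain ⟨hdiff, G, hG, hGF⟩ := hF
  have hne : ∀ s, s ≠ (p - b) / a → a * s + b ≠ p := fun s hs h =>
    hs (by rw [eq_div_iff ha]; linear_combination h)
  have haff : Differentiable ℂ (fun s => a * s + b) := (differentiable_id.const_mul a).add_const b
  refine ⟨fun s hs => (hdiff _ (hne s hs)).comp s (haff s), fun s => G (a * s + b) / a,
    (hG.comp haff).div_const a, fun s hs => ?_⟩
  dsimp only
  rw [hGF _ (hne s hs)]
  field_simp
  ring

end HolomorphicExceptSimplePole

lemma differentiable_hurwitzZeta_sub_one_div (a : UnitAddCircle) :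
    Differentiable ℂ (fun w => hurwitzZeta a w - 1 / (w - 1) / Gammaℝ w) := by
  intro w
  rcases eq_or_ne w 1 with rfl | hw
  · exact differentiableAt_hurwitzZeta_sub_one_div a
  · have hpolar : (fun w => 1 / (w - 1) / Gammaℝ w) = fun w => (w - 1)⁻¹ * (Gammaℝ w)⁻¹ := by
      funext w
      ring
    refine (differentiableAt_hurwitzZeta a hw).sub ?_
    rw [hpolar]
    exact (((differentiableAt_id (x := w)).sub_const 1).inv (sub_ne_zero.2 hw)).mul
      (differentiable_Gammaℝ_inv w)

lemma holomorphicExceptSimplePole_hurwitzZeta (a : UnitAddCircle) :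
    HolomorphicExceptSimplePole (hurwitzZeta a) 1 := by
  refine ⟨fun w hw => differentiableAt_hurwitzZeta a hw,
    fun w => (w - 1) * (hurwitzZeta a w - 1 / (w - 1) / Gammaℝ w) + (Gammaℝ w)⁻¹,
    ((differentiable_id.sub_const 1).mul (differentiable_hurwitzZeta_sub_one_div a)).add
      differentiable_Gammaℝ_inv, fun w hw => ?_⟩
  have : w - 1 ≠ 0 := sub_ne_zero.2 hw
  field_simp
  ring

lemma exists_nat_add_eq_of_pos {b : ℝ} (hb : 0 < b) :
    ∃ N : ℕ, ∃ a ∈ Set.Ioc (0 : ℝ) 1, (N : ℝ) + a = b := by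
  have hN : ((⌈b⌉₊ - 1 : ℕ) : ℝ) = ⌈b⌉₊ - 1 := by
    rw [Nat.cast_sub (Nat.one_le_iff_ne_zero.2 (Nat.ceil_pos.2 hb).ne'), Nat.cast_one]
  refine ⟨⌈b⌉₊ - 1, b - (⌈b⌉₊ - 1 : ℕ), ⟨?_, ?_⟩, by ring⟩ <;> rw [hN]
  · linarith [Nat.ceil_lt_add_one hb.le]
  · linarith [Nat.le_ceil b]

/-- The parameter of `hurwitzZeta` is taken in `(0, 1]` rather than `[0, 1)`: for `a = 0` the
removed term `1 / (0 + 0) ^ w` is not entire in `w`, since `0 ^ 0 = 1`. -/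
lemma exists_holomorphicExceptSimplePole_hasSum_one_div_add_cpow {b : ℝ} (hb : 0 < b) :
    ∃ Z : ℂ → ℂ, HolomorphicExceptSimplePole Z 1 ∧
      ∀ w : ℂ, 1 < w.re → HasSum (fun n : ℕ => 1 / ((n : ℂ) + b) ^ w) (Z w) := by
  obtain ⟨N, a, ⟨ha0, ha1⟩, rfl⟩ := exists_nat_add_eq_of_pos hb
  have hbase : ∀ j : ℕ, (j : ℂ) + a ≠ 0 := fun j => by
    exact_mod_cast (by positivity : (0 : ℝ) < j + a).ne'
  refine ⟨fun w => hurwitzZeta a w - ∑ j ∈ range N, 1 / ((j : ℂ) + a) ^ w,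
    (holomorphicExceptSimplePole_hurwitzZeta a).sub
      (Differentiable.fun_sum fun j _ => (differentiable_const 1).div
        (differentiable_id.const_cpow (Or.inl (hbase j))) (by simp [hbase j])),
    fun w hw => ?_⟩
  have := (hasSum_nat_add_iff' N).mpr (hasSum_hurwitzZeta_of_one_lt_re ⟨ha0.le, ha1⟩ hw)
  simpa only [Nat.cast_add, ofReal_add, ofReal_natCast, add_assoc] using this

lemma parabolic_orbit_sub_one {lam x t : ℝ} (hd : t * lam * (1 - x) + 2 ≠ 0) :
    ((2 - t * lam) * x + t * lam) / (t * lam * (1 - x) + 2) - 1 =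
      (x - 1) * (2 / (t * lam * (1 - x) + 2)) := by
  field_simp
  ring

lemma two_div_mul_add_two_eq {L : ℝ} (hL : L ≠ 0) (t : ℝ) :
    2 / (t * L + 2) = 2 / L / (t + 2 / L) := by
  rw [add_div' 2 t L hL, div_div_div_cancel_right₀ hL]

lemma ofReal_div_cpow_mul_ofReal_mul_pow {A B : ℝ} (hA : 0 < A) (hB : 0 < B) (c : ℝ) (s : ℂ)
    (k : ℕ) :
    ((A / B : ℝ) : ℂ) ^ s * (((c * (A / B)) ^ k : ℝ) : ℂ) =
      (c : ℂ) ^ k * (A : ℂ) ^ (s + k) * (1 / (B : ℂ) ^ (s + k)) := by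
  have hq : ((A / B : ℝ) : ℂ) ≠ 0 := ofReal_ne_zero.2 (div_pos hA hB).ne'
  calc ((A / B : ℝ) : ℂ) ^ s * (((c * (A / B)) ^ k : ℝ) : ℂ)
      = (c : ℂ) ^ k * ((A / B : ℝ) : ℂ) ^ (s + k) := by
        rw [cpow_add _ _ hq, cpow_natCast, ofReal_pow, ofReal_mul, mul_pow]
        ring
    _ = (c : ℂ) ^ k * (A : ℂ) ^ (s + k) * (1 / (B : ℂ) ^ (s + k)) := by
        rw [ofReal_div, div_cpow_ofReal_nonneg hA.le hB.le]
        ring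

theorem parabolic_part_monomial_meromorphic
    (lam : ℝ) (hlam : 0 < lam) (x : ℝ) (hx : x < 1) (k : ℕ) :
    ∃ F : ℂ → ℂ,
      (∀ s : ℂ, s ≠ (1 - (k : ℂ)) / 2 → DifferentiableAt ℂ F s) ∧
      (∀ s : ℂ, 1 / 2 < s.re →
        F s = ∑' n : ℕ,
          (((2 / (((n : ℝ) + 1) * lam * (1 - x) + 2)) : ℝ) : ℂ) ^ (2 * s) *
            (((((2 - ((n : ℝ) + 1) * lam) * x + ((n : ℝ) + 1) * lam) /
                  (((n : ℝ) + 1) * lam * (1 - x) + 2) - 1) ^ k : ℝ) : ℂ)) ∧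
      ∃ G : ℂ → ℂ, Differentiable ℂ G ∧
        ∀ s : ℂ, s ≠ (1 - (k : ℂ)) / 2 → G s = (s - (1 - (k : ℂ)) / 2) * F s := by
  have hL : 0 < lam * (1 - x) := mul_pos hlam (sub_pos.2 hx)
  set a := 2 / (lam * (1 - x)) with ha_def
  have ha : 0 < a := by positivity
  obtain ⟨Z, hZ, hZsum⟩ :=
    exists_holomorphicExceptSimplePole_hasSum_one_div_add_cpow (by positivity : 0 < 1 + a)
  have hfactor : Differentiable ℂ fun s : ℂ => ((x - 1 : ℝ) : ℂ) ^ k * (a : ℂ) ^ (2 * s + k) :=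
    (((differentiable_id.const_mul 2).add_const _).const_cpow
      (Or.inl (ofReal_ne_zero.2 ha.ne'))).const_mul _
  obtain ⟨hdiff, G, hG, hGF⟩ := (hZ.comp_mul_add two_ne_zero (k : ℂ)).mul_left hfactor
  refine ⟨_, hdiff, fun s hs => ?_, G, hG, hGF⟩
  have hw : 1 < (2 * s + k).re := by
    simp only [add_re, mul_re, re_ofNat, im_ofNat, natCast_re]
    linarith [(Nat.cast_nonneg k : (0 : ℝ) ≤ k)]
  rw [← ((hZsum _ hw).mul_left _).tsum_eq]
  refine tsum_congr fun n => ?_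
  have hd : ((n : ℝ) + 1) * lam * (1 - x) + 2 ≠ 0 := by positivity
  have hshift : (((n : ℝ) + 1 + a : ℝ) : ℂ) = (n : ℂ) + ((1 + a : ℝ) : ℂ) := by
    push_cast
    ring
  rw [parabolic_orbit_sub_one hd, mul_assoc _ lam, two_div_mul_add_two_eq hL.ne', ← ha_def,
    ofReal_div_cpow_mul_ofReal_mul_pow ha (by positivity), hshift]
end

section
/- Let V be a finite-dimensional complex inner product space and let A be a unitary operator on V such that 1 is not an eigenvalue of A (the 'regular' case). Let k ∈ ℕ and v ∈ V. Then there exists an entire function F : ℂ → V such that F(s) = Σ_{n=1}^∞ (2/(nλ(1−x)+2))^{2s} · (xₙ − 1)^k · Aⁿ v for all s ∈ ℂ with Re s > 1/2. (In the regular case the twisted parabolic part of the fast transfer operator, evaluated on monomials at a real point, extends to an entire function of s.) -/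
/-!
With `a = 2 / (λ(1 - x))` one has `2 / (nλ(1 - x) + 2) = a / (n + a)` and
`xₙ - 1 = -(1 - x) · a / (n + a)`, so for `w = 2s + k` the series equals `(-(1 - x))ᵏ aʷ Z(w)`
with the operator Lerch series `Z(w) = ∑_{n ≥ 0} (n + b)^(-w) Aⁿ⁺¹ v`, `b = 1 + a`. It suffices
to continue `Z` to an entire function.

Summation by parts against the unitary `A` gives
`(A⁻¹ - 1) Zₘ(w) = Zₘ₊₁(w) + Δᵐ(t^(-w))(b) v`, where `Zₘ` is the series with coefficients the
`m`-th forward differences `Δᵐ(t^(-w))(n + b) = O((n + b)^(-re w - m))`, so that `Zₘ` is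
holomorphic on `re w > 1 - m`. When `A⁻¹ - 1` has a bounded left inverse `B` (in finite dimension,
exactly when `A` has no fixed vector), iterating gives
`Z = Bᵐ Zₘ + ∑_{j < m} Bʲ⁺¹ (Δʲ(t^(-w))(b) v)` on `re w > 1`, and the right-hand sides for the
various `m` agree on their common half-planes and glue to an entire function.
-/

open Complex fwdDiff

noncomputable section

def invPowDiff (m : ℕ) (w : ℂ) : ℝ → ℂ := (Δ_[1])^[m] fun t : ℝ => (t : ℂ) ^ (-w)

lemma invPowDiff_zero (w : ℂ) (t : ℝ) : invPowDiff 0 w t = (t : ℂ) ^ (-w) := rfl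

lemma invPowDiff_succ (m : ℕ) (w : ℂ) (t : ℝ) :
    invPowDiff (m + 1) w t = invPowDiff m w (t + 1) - invPowDiff m w t := by
  rw [invPowDiff, Function.iterate_succ_apply']
  rfl

lemma hasDerivAt_invPowDiff (m : ℕ) (w : ℂ) {t : ℝ} (ht : 0 < t) :
    HasDerivAt (invPowDiff m w) (-w * invPowDiff m (w + 1) t) t := by
  induction m generalizing t with
  | zero =>
    rcases eq_or_ne w 0 with rfl | hw
    · simpa [invPowDiff] using hasDerivAt_const t (1 : ℂ)
    · exact (hasDerivAt_ofReal_cpow_const ht.ne' (neg_ne_zero.2 hw)).congr_deriv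
        (by rw [invPowDiff_zero, neg_add, sub_eq_add_neg])
  | succ m ih =>
    have hshift := (ih (t := t + 1) (by linarith)).comp_add_const t 1
    rw [show invPowDiff (m + 1) w = fun s => invPowDiff m w (s + 1) - invPowDiff m w s from
      funext (invPowDiff_succ m w)]
    exact (hshift.sub (ih ht)).congr_deriv (by rw [invPowDiff_succ]; ring)

lemma differentiable_invPowDiff (m : ℕ) {t : ℝ} (ht : 0 < t) :
    Differentiable ℂ fun w => invPowDiff m w t := by
  induction m generalizing t with
  | zero => exact differentiable_neg.const_cpow (Or.inl (ofReal_ne_zero.2 ht.ne'))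
  | succ m ih =>
    simp only [invPowDiff_succ]
    exact (ih (by linarith)).sub (ih ht)

lemma norm_invPowDiff_le (m : ℕ) (w : ℂ) {t : ℝ} (ht : 0 < t) (hw : 0 ≤ w.re + m) :
    ‖invPowDiff m w t‖ ≤ (‖w‖ + m) ^ m * t ^ (-(w.re + m)) := by
  induction m generalizing w t with
  | zero => simp [invPowDiff_zero, norm_cpow_eq_rpow_re_of_pos ht]
  | succ m ih =>
    push_cast at hw ⊢
    have hre : (w + 1).re + m = w.re + (m + 1) := by rw [add_re, one_re]; ring
    have hderiv : ∀ s ∈ Set.Ico t (t + 1), ‖-w * invPowDiff m (w + 1) s‖ ≤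
        ‖w‖ * ((‖w‖ + 1 + m) ^ m * t ^ (-(w.re + (m + 1)))) := by
      intro s hs
      rw [norm_mul, norm_neg]
      gcongr
      calc ‖invPowDiff m (w + 1) s‖ ≤ (‖w + 1‖ + m) ^ m * s ^ (-((w + 1).re + m)) :=
            ih (w + 1) (ht.trans_le hs.1) (by linarith)
        _ ≤ (‖w‖ + 1 + m) ^ m * t ^ (-(w.re + (m + 1))) := by
          have hs₀ : 0 < s := ht.trans_le hs.1
          rw [hre]
          gcongr ?_ * ?_
          · gcongr
            linarith [norm_add_le w 1, norm_one (α := ℂ)]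
          · exact Real.rpow_le_rpow_of_nonpos ht hs.1 (by linarith)
    have hmvt := norm_image_sub_le_of_norm_deriv_le_segment'
      (fun s hs => (hasDerivAt_invPowDiff m w (ht.trans_le hs.1)).hasDerivWithinAt) hderiv
      (t + 1) (Set.right_mem_Icc.2 (by linarith))
    rw [invPowDiff_succ]
    refine hmvt.trans ?_
    calc ‖w‖ * ((‖w‖ + 1 + m) ^ m * t ^ (-(w.re + (m + 1)))) * (t + 1 - t)
        = ‖w‖ * (‖w‖ + (m + 1)) ^ m * t ^ (-(w.re + (m + 1))) := by ring_nf
      _ ≤ (‖w‖ + (m + 1)) * (‖w‖ + (m + 1)) ^ m * t ^ (-(w.re + (m + 1))) := by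
          gcongr; linarith
      _ = _ := by ring

lemma summable_nat_add_rpow_neg {b p : ℝ} (hb : 0 < b) (hp : 1 < p) :
    Summable fun n : ℕ => ((n : ℝ) + b) ^ (-p) := by
  refine ((Real.summable_one_div_nat_add_rpow b p).2 hp).congr fun n => ?_
  have hnb : 0 < (n : ℝ) + b := by positivity
  rw [abs_of_pos hnb, Real.rpow_neg hnb.le, one_div]

lemma summable_norm_invPowDiff {b : ℝ} (hb : 1 ≤ b) (m : ℕ) {w : ℂ} (hw : 1 - m < w.re) :
    Summable fun n : ℕ => ‖invPowDiff m w (n + b)‖ := by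
  refine .of_nonneg_of_le (fun _ => norm_nonneg _) (fun n => ?_)
    ((summable_nat_add_rpow_neg (b := b) (p := w.re + m) (by linarith) (by linarith)).mul_left
      ((‖w‖ + m) ^ m))
  exact norm_invPowDiff_le m w (by positivity) (by linarith)

lemma summable_invPowDiff_smul {V : Type*} [NormedAddCommGroup V] [NormedSpace ℂ V]
    [CompleteSpace V] {b : ℝ} (hb : 1 ≤ b) (m : ℕ) {w : ℂ} (hw : 1 - m < w.re) {g : ℕ → V}
    {C : ℝ} (hg : ∀ n, ‖g n‖ ≤ C) : Summable fun n : ℕ => invPowDiff m w (n + b) • g n :=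
  .of_norm_bounded ((summable_norm_invPowDiff hb m hw).mul_right C) fun n => by
    rw [norm_smul]
    exact mul_le_mul_of_nonneg_left (hg n) (norm_nonneg _)

namespace LerchSeries

variable {V : Type*} [NormedAddCommGroup V] [NormedSpace ℂ V]

section Definitions

variable (A : V ≃ₗᵢ[ℂ] V) (v : V) (b : ℝ)

def diffSeries (m : ℕ) (w : ℂ) : V := ∑' n : ℕ, invPowDiff m w (n + b) • (A ^ (n + 1)) v

def continuation (B : V →L[ℂ] V) (m : ℕ) (w : ℂ) : V :=
  (B ^ m) (diffSeries A v b m w) + ∑ j ∈ Finset.range m, (B ^ (j + 1)) (invPowDiff j w b • v)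

end Definitions

variable [CompleteSpace V] {A : V ≃ₗᵢ[ℂ] V} {v : V} {b : ℝ}

lemma symm_diffSeries_sub (hb : 1 ≤ b) (m : ℕ) {w : ℂ} (hw : 1 - m < w.re) :
    A.symm (diffSeries A v b m w) - diffSeries A v b m w =
      diffSeries A v b (m + 1) w + invPowDiff m w b • v := by
  have hS0 := summable_invPowDiff_smul hb m hw (g := fun n => (A ^ n) v) (C := ‖v‖)
    fun n => by simp
  have hS1 := summable_invPowDiff_smul hb m hw (g := fun n => (A ^ (n + 1)) v) (C := ‖v‖)
    fun n => by simp
  have hsymm : A.symm (diffSeries A v b m w) = ∑' n : ℕ, invPowDiff m w (n + b) • (A ^ n) v := by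
    refine A.symm.toContinuousLinearEquiv.map_tsum.trans (tsum_congr fun n => ?_)
    rw [LinearIsometryEquiv.coe_toContinuousLinearEquiv, map_smul, pow_succ',
      LinearIsometryEquiv.coe_mul, Function.comp_apply, LinearIsometryEquiv.symm_apply_apply]
  rw [hsymm, hS0.tsum_eq_zero_add, diffSeries, diffSeries, add_sub_assoc,
    ← ((summable_nat_add_iff 1).2 hS0).tsum_sub hS1, add_comm]
  congr 1
  · refine tsum_congr fun n => ?_
    rw [← sub_smul, invPowDiff_succ, Nat.cast_succ, add_right_comm]
  · rw [Nat.cast_zero, zero_add, pow_zero, LinearIsometryEquiv.coe_one, id]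

variable {B : V →L[ℂ] V}

lemma continuation_succ (hB : ∀ y, B (A.symm y - y) = y) (hb : 1 ≤ b) (m : ℕ) {w : ℂ}
    (hw : 1 - m < w.re) : continuation A v b B (m + 1) w = continuation A v b B m w := by
  have h : (B ^ (m + 1)) (A.symm (diffSeries A v b m w) - diffSeries A v b m w) =
      (B ^ m) (diffSeries A v b m w) := by
    rw [pow_succ]
    exact congrArg (B ^ m) (hB _)
  rw [symm_diffSeries_sub hb m hw, map_add] at h
  rw [continuation, continuation, Finset.sum_range_succ, ← h]
  abel

lemma continuation_eq_of_le (hB : ∀ y, B (A.symm y - y) = y) (hb : 1 ≤ b) {j m : ℕ}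
    (hjm : j ≤ m) {w : ℂ} (hw : 1 - j < w.re) :
    continuation A v b B m w = continuation A v b B j w := by
  induction m, hjm using Nat.le_induction with
  | base => rfl
  | succ m hjm ih =>
    have : (j : ℝ) ≤ m := by exact_mod_cast hjm
    rw [continuation_succ hB hb m (by linarith), ih]

lemma continuation_eq (hB : ∀ y, B (A.symm y - y) = y) (hb : 1 ≤ b) {j m : ℕ} {w : ℂ}
    (hj : 1 - j < w.re) (hm : 1 - m < w.re) :
    continuation A v b B m w = continuation A v b B j w := by
  rcases le_total j m with hjm | hmj
  · exact continuation_eq_of_le hB hb hjm hj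
  · exact (continuation_eq_of_le hB hb hmj hm).symm

lemma differentiableAt_diffSeries (hb : 1 ≤ b) (m : ℕ) {w₀ : ℂ} (hw₀ : 1 - m < w₀.re) :
    DifferentiableAt ℂ (diffSeries A v b m) w₀ := by
  set ε := (w₀.re - (1 - m)) / 2
  have hε : 0 < ε := by simp only [ε]; linarith
  set R := ‖w₀‖ + 1
  set U := {w : ℂ | 1 + ε - m < w.re ∧ ‖w‖ < R}
  have hU : IsOpen U :=
    (isOpen_lt continuous_const continuous_re).inter (isOpen_lt continuous_norm continuous_const)
  have hw₀U : w₀ ∈ U := ⟨by simp only [ε]; linarith, by simp only [R]; linarith⟩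
  have hdiff : DifferentiableOn ℂ (diffSeries A v b m) U := by
    refine differentiableOn_tsum_of_summable_norm
      (u := fun n : ℕ => (R + m) ^ m * ‖v‖ * ((n : ℝ) + b) ^ (-(1 + ε)))
      ((summable_nat_add_rpow_neg (by linarith) (by linarith)).mul_left _)
      (fun n => ((differentiable_invPowDiff m (by positivity)).smul_const _).differentiableOn)
      hU fun n w ⟨hre, hnorm⟩ => ?_
    have hnb : 1 ≤ (n : ℝ) + b := by linarith [n.cast_nonneg (α := ℝ)]
    rw [norm_smul, LinearIsometryEquiv.norm_map, mul_right_comm]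
    gcongr
    refine (norm_invPowDiff_le m w (by linarith) (by linarith)).trans ?_
    gcongr ?_ * ?_
    · gcongr
    · exact Real.rpow_le_rpow_of_exponent_le hnb (by linarith)
  exact hdiff.differentiableAt (hU.mem_nhds hw₀U)

lemma differentiableAt_continuation (B : V →L[ℂ] V) (hb : 1 ≤ b) (m : ℕ) {w₀ : ℂ}
    (hw₀ : 1 - m < w₀.re) : DifferentiableAt ℂ (continuation A v b B m) w₀ := by
  have hterm (j : ℕ) : Differentiable ℂ fun w => (B ^ (j + 1)) (invPowDiff j w b • v) :=
    (B ^ (j + 1)).differentiable.comp ((differentiable_invPowDiff j (by linarith)).smul_const v)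
  exact ((B ^ m).differentiableAt.comp w₀ (differentiableAt_diffSeries hb m hw₀)).add
    (Differentiable.fun_sum fun j _ => hterm j).differentiableAt

theorem exists_differentiable_eq_tsum_cpow (hA : ((A.symm : V →L[ℂ] V) - 1).HasLeftInverse)
    (hb : 1 ≤ b) : ∃ G : ℂ → V, Differentiable ℂ G ∧
      ∀ w : ℂ, 1 < w.re → G w = ∑' n : ℕ, (((n : ℝ) + b : ℝ) : ℂ) ^ (-w) • (A ^ (n + 1)) v := by
  obtain ⟨B, hB⟩ := hA
  replace hB : ∀ y, B (A.symm y - y) = y := hB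
  have hceil (w : ℂ) : 1 - (⌈2 - w.re⌉₊ : ℝ) < w.re := by linarith [Nat.le_ceil (2 - w.re)]
  refine ⟨fun w => continuation A v b B ⌈2 - w.re⌉₊ w, fun w₀ => ?_, fun w hw => ?_⟩
  · have hnhds : {w : ℂ | 1 - (⌈2 - w₀.re⌉₊ : ℝ) < w.re} ∈ nhds w₀ :=
      (isOpen_lt continuous_const continuous_re).mem_nhds (hceil w₀)
    have hdiff := differentiableAt_continuation (A := A) (v := v) B hb _ (hceil w₀)
    refine hdiff.congr_of_eventuallyEq ?_
    filter_upwards [hnhds] with w hw using continuation_eq hB hb hw (hceil w)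
  · dsimp only
    rw [continuation_eq hB hb (j := 0) (by simpa using hw) (hceil w), continuation, pow_zero,
      Finset.sum_range_zero, add_zero]
    rfl

end LerchSeries

lemma hasLeftInverse_symm_sub_one {V : Type*} [NormedAddCommGroup V] [NormedSpace ℂ V]
    [FiniteDimensional ℂ V] (A : V ≃ₗᵢ[ℂ] V) (hA : ∀ v : V, A v = v → v = 0) :
    ((A.symm : V →L[ℂ] V) - 1).HasLeftInverse := by
  refine .of_injective_of_finiteDimensional fun y z hyz => sub_eq_zero.1 (hA _ ?_)
  have hfix : A.symm (y - z) = y - z := by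
    change A.symm y - y = A.symm z - z at hyz
    rw [map_sub, sub_eq_sub_iff_sub_eq_sub.1 hyz]
  exact A.eq_symm_apply.1 hfix.symm

lemma ofReal_div_cpow_mul_pow {c t : ℝ} (hc : 0 < c) (ht : 0 < t) (y : ℝ) (z : ℂ) (k : ℕ) :
    ((c / t : ℝ) : ℂ) ^ z * (((y * (c / t)) ^ k : ℝ) : ℂ) =
      ((y ^ k : ℝ) * (c : ℂ) ^ (z + k)) * (t : ℂ) ^ (-(z + k)) := by
  rw [mul_pow, ofReal_mul, ofReal_pow, ofReal_pow, mul_left_comm,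
    ← cpow_natCast ((c / t : ℝ) : ℂ) k, ← cpow_add _ _ (by exact_mod_cast (div_pos hc ht).ne'),
    ofReal_div, div_cpow_ofReal_nonneg hc.le ht.le, cpow_neg, div_eq_mul_inv, mul_assoc]

lemma parabolic_coeff_eq {lam x : ℝ} (hlam : 0 < lam) (hx : x < 1) (n : ℝ) (hn : 0 ≤ n)
    (s : ℂ) (k : ℕ) :
    (((2 / ((n + 1) * lam * (1 - x) + 2) : ℝ) : ℂ) ^ (2 * s) *
        (((((2 - (n + 1) * lam) * x + (n + 1) * lam) / ((n + 1) * lam * (1 - x) + 2) - 1) ^ k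
          : ℝ) : ℂ)) =
      (((-(1 - x)) ^ k : ℝ) * ((2 / (lam * (1 - x)) : ℝ) : ℂ) ^ (2 * s + k)) *
        ((n + (1 + 2 / (lam * (1 - x))) : ℝ) : ℂ) ^ (-(2 * s + k)) := by
  have hx₁ : 0 < 1 - x := by linarith
  set a : ℝ := 2 / (lam * (1 - x))
  have ha : 0 < a := by positivity
  have hD : 2 / ((n + 1) * lam * (1 - x) + 2) = a / (n + (1 + a)) := by
    simp only [a]
    field_simp
    ring
  have hxn : ((2 - (n + 1) * lam) * x + (n + 1) * lam) / ((n + 1) * lam * (1 - x) + 2) - 1 =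
      -(1 - x) * (a / (n + (1 + a))) := by
    rw [← hD]
    field_simp
    ring
  rw [hxn, hD, ofReal_div_cpow_mul_pow ha (by positivity)]

theorem parabolic_part_regular_entire
    {V : Type} [NormedAddCommGroup V] [InnerProductSpace ℂ V] [FiniteDimensional ℂ V]
    (A : V ≃ₗᵢ[ℂ] V) (hA : ∀ v : V, A v = v → v = 0)
    (lam : ℝ) (hlam : 0 < lam) (x : ℝ) (hx : x < 1) (k : ℕ) (v : V) :
    ∃ F : ℂ → V, Differentiable ℂ F ∧
      ∀ s : ℂ, 1 / 2 < s.re →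
        F s = ∑' n : ℕ,
          ((((2 / (((n : ℝ) + 1) * lam * (1 - x) + 2)) : ℝ) : ℂ) ^ (2 * s) *
              (((((2 - ((n : ℝ) + 1) * lam) * x + ((n : ℝ) + 1) * lam) /
                    (((n : ℝ) + 1) * lam * (1 - x) + 2) - 1) ^ k : ℝ) : ℂ)) •
            (A ^ (n + 1)) v := by
  have : CompleteSpace V := FiniteDimensional.complete ℂ V
  have hx₁ : 0 < 1 - x := by linarith
  set a : ℝ := 2 / (lam * (1 - x))
  have ha : 0 < a := by positivity
  obtain ⟨G, hG, hGeq⟩ := LerchSeries.exists_differentiable_eq_tsum_cpow (v := v) (b := 1 + a)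
    (hasLeftInverse_symm_sub_one A hA) (by linarith)
  refine ⟨fun s => (((-(1 - x)) ^ k : ℝ) * (a : ℂ) ^ (2 * s + k)) • G (2 * s + k), ?_,
    fun s hs => ?_⟩
  · have hlin : Differentiable ℂ fun s : ℂ => 2 * s + k := by fun_prop
    exact ((hlin.const_cpow (Or.inl (ofReal_ne_zero.2 ha.ne'))).const_mul _).smul (hG.comp hlin)
  have hre : 1 < (2 * s + k).re := by
    simp only [add_re, mul_re, re_ofNat, im_ofNat, natCast_re]
    linarith [k.cast_nonneg (α := ℝ)]
  beta_reduce
  rw [hGeq _ hre, ← tsum_const_smul'']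
  refine tsum_congr fun n => ?_
  rw [smul_smul, parabolic_coeff_eq hlam hx _ n.cast_nonneg]
end
end
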